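/- For every point x of X₂, the complement X₂ \ {x} is connected. -/

import Mathlib

/-!
Each sphere `S × {i}` maps injectively into `X₂`, so the part of `X₂ \ {x}` lying on it is the
image of a sphere minus at most one point, which is connected. The two pieces cover `X₂ \ {x}`,
and they meet: of the two distinct nodes `[(0,0)] = [(0,1)]` and `[(1,0)] = [(2,1)]`, at least one
differs from `x`.
-/

open OnePoint

/-- Identifications `(0,0)∼(0,1)`, `(1,0)∼(2,1)`, `(1,1)∼(2,0)` on `S × Fin 2`. -/
def relEx3₂ : OnePoint ℂ × Fin 2 → OnePoint ℂ × Fin 2 → Prop := fun a b =>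
  (a = (((0 : ℂ) : OnePoint ℂ), 0) ∧ b = (((0 : ℂ) : OnePoint ℂ), 1)) ∨
  (a = (((1 : ℂ) : OnePoint ℂ), 0) ∧ b = (((2 : ℂ) : OnePoint ℂ), 1)) ∨
  (a = (((1 : ℂ) : OnePoint ℂ), 1) ∧ b = (((2 : ℂ) : OnePoint ℂ), 0))

open Set Function Topology

theorem isConnected_compl_of_subsingleton {X : Type*} [TopologicalSpace X] [ConnectedSpace X]
    (hX : ∀ a : X, IsConnected ({a}ᶜ : Set X)) {s : Set X} (hs : s.Subsingleton) :
    IsConnected sᶜ := by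
  obtain rfl | ⟨a, rfl⟩ := hs.eq_empty_or_singleton
  · simpa using isConnected_univ
  · exact hX a

theorem isConnected_compl_singleton_of_two_sheets {X Y : Type*} [TopologicalSpace X]
    [TopologicalSpace Y] [ConnectedSpace X] (hX : ∀ a : X, IsConnected ({a}ᶜ : Set X))
    {f g : X → Y} (hf : Continuous f) (hg : Continuous g) (hf_inj : Injective f)
    (hg_inj : Injective g) (hcover : range f ∪ range g = univ) {n₁ n₂ : Y} (hn : n₁ ≠ n₂)
    (hn₁ : n₁ ∈ range f ∩ range g) (hn₂ : n₂ ∈ range f ∩ range g) (y : Y) :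
    IsConnected ({y}ᶜ : Set Y) := by
  have piece : ∀ {h : X → Y}, Continuous h → Injective h → IsConnected ({y}ᶜ ∩ range h) := by
    intro h hc hinj
    rw [← image_preimage_eq_inter_range, preimage_compl]
    exact (isConnected_compl_of_subsingleton hX
      (subsingleton_singleton.preimage hinj)).image h hc.continuousOn
  obtain ⟨n, hn_node, hny⟩ : ∃ n ∈ range f ∩ range g, n ≠ y := by
    by_cases h : n₁ = y
    · exact ⟨n₂, hn₂, fun h₂ => hn (h.trans h₂.symm)⟩
    · exact ⟨n₁, hn₁, h⟩
  rw [← inter_univ {y}ᶜ, ← hcover, inter_union_distrib_left]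
  exact (piece hf hf_inj).union ⟨n, ⟨hny, hn_node.1⟩, ⟨hny, hn_node.2⟩⟩ (piece hg hg_inj)

theorem OnePoint.isConnected_compl_singleton {X : Type*} [TopologicalSpace X] [T1Space X]
    [ConnectedSpace X] [NoncompactSpace X] [∀ z : X, (𝓝[≠] z).NeBot]
    (hX : ∀ z : X, IsConnected ({z}ᶜ : Set X)) (a : OnePoint X) :
    IsConnected ({a}ᶜ : Set (OnePoint X)) := by
  induction a using OnePoint.rec with
  | infty =>
    rw [← compl_range_coe, compl_compl]
    exact isConnected_range continuous_coe
  | coe z =>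
    have hdense : Dense (((↑) : X → OnePoint X) '' {z}ᶜ) := by
      rw [image_compl_eq_range_sdiff_image coe_injective, image_singleton]
      exact denseRange_coe.sdiff_singleton _
    refine ((hX z).image _ continuous_coe.continuousOn).subset_closure ?_
      (by simp [hdense.closure_eq])
    rintro _ ⟨w, hw, rfl⟩
    simpa using hw

section SheetCoord

open scoped Classical

/-- The gluing identifies `(s, j)` with `(σ s, 1 - j)` at the nodes, where `σ` swaps `1` and `2`
and fixes `0`; so reading every point in the coordinate of sheet `i` is invariant. -/
noncomputable def sheetCoord (i : Fin 2) (p : OnePoint ℂ × Fin 2) : OnePoint ℂ :=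
  if p.2 = i then p.1 else Equiv.swap ((1 : ℂ) : OnePoint ℂ) ((2 : ℂ) : OnePoint ℂ) p.1

theorem sheetCoord_eq_of_relEx3₂ (i : Fin 2) {a b : OnePoint ℂ × Fin 2} (h : relEx3₂ a b) :
    sheetCoord i a = sheetCoord i b := by
  have h01 : ((0 : ℂ) : OnePoint ℂ) ≠ ((1 : ℂ) : OnePoint ℂ) := by simp
  have h02 : ((0 : ℂ) : OnePoint ℂ) ≠ ((2 : ℂ) : OnePoint ℂ) := by simp
  rcases h with ⟨rfl, rfl⟩ | ⟨rfl, rfl⟩ | ⟨rfl, rfl⟩ <;> fin_cases i <;>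
    simp [sheetCoord, Equiv.swap_apply_of_ne_of_ne h01 h02]

end SheetCoord

def sheet (i : Fin 2) (s : OnePoint ℂ) : Quot relEx3₂ :=
  Quot.mk relEx3₂ (s, i)

theorem continuous_sheet (i : Fin 2) : Continuous (sheet i) :=
  continuous_quot_mk.comp (continuous_id.prodMk continuous_const)

theorem sheet_injective (i : Fin 2) : Injective (sheet i) := fun s t h => by
  simpa [sheet, sheetCoord] using
    congrArg (Quot.lift (sheetCoord i) fun _ _ => sheetCoord_eq_of_relEx3₂ i) h

theorem range_sheet_zero_union_range_sheet_one : range (sheet 0) ∪ range (sheet 1) = univ := by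
  refine eq_univ_of_forall fun y => ?_
  obtain ⟨⟨s, i⟩, rfl⟩ := Quot.exists_rep y
  fin_cases i
  exacts [Or.inl ⟨s, rfl⟩, Or.inr ⟨s, rfl⟩]

theorem sheet_zero_zero_eq_sheet_one_zero :
    sheet 0 ((0 : ℂ) : OnePoint ℂ) = sheet 1 ((0 : ℂ) : OnePoint ℂ) :=
  Quot.sound (Or.inl ⟨rfl, rfl⟩)

theorem sheet_zero_one_eq_sheet_one_two :
    sheet 0 ((1 : ℂ) : OnePoint ℂ) = sheet 1 ((2 : ℂ) : OnePoint ℂ) :=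
  Quot.sound (Or.inr (Or.inl ⟨rfl, rfl⟩))

/-- for every point `x` of `X₂ = Quot relEx3₂`, the complement `X₂ \ {x}`
is connected. -/
theorem double_cover_statement_15 (x : Quot relEx3₂) :
    IsConnected ({x}ᶜ : Set (Quot relEx3₂)) := by
  have hsphere : ∀ a : OnePoint ℂ, IsConnected ({a}ᶜ : Set (OnePoint ℂ)) :=
    OnePoint.isConnected_compl_singleton fun z =>
      isConnected_compl_singleton_of_one_lt_rank (by simp [Complex.rank_real_complex]) z
  have hnodes : sheet 0 ((0 : ℂ) : OnePoint ℂ) ≠ sheet 0 ((1 : ℂ) : OnePoint ℂ) :=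
    (sheet_injective 0).ne (by simp)
  exact isConnected_compl_singleton_of_two_sheets hsphere (continuous_sheet 0)
    (continuous_sheet 1) (sheet_injective 0) (sheet_injective 1)
    range_sheet_zero_union_range_sheet_one hnodes
    ⟨mem_range_self _, sheet_zero_zero_eq_sheet_one_zero ▸ mem_range_self _⟩
    ⟨mem_range_self _, sheet_zero_one_eq_sheet_one_two ▸ mem_range_self _⟩ x
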